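/- For the update scheme I_T^1, i.e., S = {t ∈ ℕ : t mod I ∉ {1,…,I_1}} with I = I_1 + I_2, and T = (R+1)·I for some integer R ≥ 0, the shifted quantities satisfy Â_T ≤ (1/(2I))·( ((1+ρ^{2I_2})/(1−ρ^{2I_2}))·I_1² + ((1+ρ²)/(1−ρ²))·I_1 ) + 1/(1−ρ²) and max{B̂_T, Ĉ_T} ≤ K̃², where K̃ = I_1/(1−ρ^{I_2}) + 1/(1−ρ). -/

import Mathlib

open Finset

/-- `ρ_{s,t-1}` for the update scheme `I_T¹ = {t : t mod (I₁+I₂) ∉ [I₁]}`: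
equal to `ρ ^ |[s:t-1] ∩ I_T¹|` when `s < t`, and `1` when `s ≥ t`. -/
noncomputable def rhoOne (ρ : ℝ) (I1 I2 s t : ℕ) : ℝ :=
  if s < t then
    ρ ^ ((Finset.Icc s (t - 1)).filter
      (fun l => ¬ l % (I1 + I2) ∈ Finset.Icc 1 I1)).card
  else 1

/-- `Â_T` for the scheme `I_T¹` (communication-before update rule), built from the
shifted factors `ρ_{s+1,t−1}`. -/
noncomputable def ATHatOne (ρ : ℝ) (I1 I2 T : ℕ) : ℝ :=
  (T : ℝ)⁻¹ * ∑ t ∈ Finset.Icc 1 T,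
    ∑ s ∈ Finset.Icc 1 (t - 1), (rhoOne ρ I1 I2 (s + 1) t) ^ 2

/-- `B̂_T` for the scheme `I_T¹` (communication-before update rule). -/
noncomputable def BTHatOne (ρ : ℝ) (I1 I2 T : ℕ) : ℝ :=
  (T : ℝ)⁻¹ * ∑ t ∈ Finset.Icc 1 T,
    (∑ s ∈ Finset.Icc 1 (t - 1), rhoOne ρ I1 I2 (s + 1) t) ^ 2

/-- `Ĉ_T` for the scheme `I_T¹` (communication-before update rule). -/
noncomputable def CTHatOne (ρ : ℝ) (I1 I2 T : ℕ) : ℝ :=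
  ⨆ s ∈ Finset.Icc 1 (T - 1),
    ∑ t ∈ Finset.Icc (s + 1) T,
      rhoOne ρ I1 I2 (s + 1) t * ∑ l ∈ Finset.Icc 1 (t - 1), rhoOne ρ I1 I2 (l + 1) t



/-- cumulative count of communication rounds in `[0, x]`. -/
def GG (I1 I2 x : ℕ) : ℕ :=
  ((Finset.range (x+1)).filter (fun l => ¬ l % (I1 + I2) ∈ Finset.Icc 1 I1)).card

lemma succ_divmod (a b : ℕ) (hb : 0 < b) :
    ((a+1)/b = a/b + 1 ∧ (a+1) % b = 0 ∧ a % b = b - 1) ∨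
      ((a+1)/b = a/b ∧ (a+1) % b = a % b + 1) := by
  by_cases hd : b ∣ a + 1
  · left
    have hq : (a+1)/b = a/b + 1 := by rw [Nat.succ_div, if_pos hd]
    have hm : (a+1) % b = 0 := Nat.mod_eq_zero_of_dvd hd
    have e1 := Nat.div_add_mod (a+1) b
    have e2 := Nat.div_add_mod a b
    rw [hq, hm, Nat.mul_add, Nat.mul_one] at e1
    exact ⟨hq, hm, by omega⟩
  · right
    have hq : (a+1)/b = a/b := by rw [Nat.succ_div, if_neg hd, Nat.add_zero]
    have e1 := Nat.div_add_mod (a+1) b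
    have e2 := Nat.div_add_mod a b
    rw [hq] at e1
    have hm : (a+1) % b ≠ 0 := fun h => hd (Nat.dvd_iff_mod_eq_zero.mpr h)
    exact ⟨hq, by omega⟩

lemma GG_succ (I1 I2 x : ℕ) : GG I1 I2 (x+1) =
    GG I1 I2 x + (if (x+1) % (I1 + I2) ∈ Finset.Icc 1 I1 then 0 else 1) := by
  unfold GG
  rw [Finset.range_add_one, Finset.filter_insert]
  by_cases hm : (x+1) % (I1+I2) ∈ Finset.Icc 1 I1
  · rw [if_pos hm, if_neg (not_not.mpr hm)]; omega
  · rw [if_neg hm, if_pos hm, Finset.card_insert_of_notMem (by simp)]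

lemma GG_val (I1 I2 : ℕ) (hI2 : 1 ≤ I2) (x : ℕ) :
    GG I1 I2 x = x / (I1+I2) * I2 + 1 + (x % (I1+I2) - I1) := by
  have hI : 0 < I1 + I2 := by omega
  induction x with
  | zero => simp [GG, Finset.range_one, Finset.filter_singleton, Nat.zero_mod, Nat.zero_div]
  | succ n ih =>
    rw [GG_succ, ih]
    rcases succ_divmod n (I1+I2) hI with ⟨h1, h2, h3⟩ | ⟨h1, h2⟩
    · rw [if_neg (by simp [h2]), h1, h2, h3, Nat.add_mul, Nat.one_mul]
      omega
    · rw [h1, h2]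
      simp only [Finset.mem_Icc]
      split_ifs with h <;> omega

lemma GG_mono (I1 I2 : ℕ) {x y : ℕ} (h : x ≤ y) : GG I1 I2 x ≤ GG I1 I2 y := by
  apply Finset.card_le_card
  apply Finset.filter_subset_filter
  exact Finset.range_subset_range.2 (by omega)

/-- counting over an interval via the cumulative count. -/
lemma count_eq (I1 I2 s b : ℕ) (h : s ≤ b) :
    (((Finset.Icc (s+1) b)).filter (fun l => ¬ l % (I1 + I2) ∈ Finset.Icc 1 I1)).card
      + GG I1 I2 s = GG I1 I2 b := by
  unfold GG
  have hsplit : Finset.range (b+1) = Finset.Icc (s+1) b ∪ Finset.range (s+1) := by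
    ext l; simp only [Finset.mem_range, Finset.mem_union, Finset.mem_Icc]; omega
  rw [hsplit, Finset.filter_union, Finset.card_union_of_disjoint]
  apply Finset.disjoint_filter_filter
  rw [Finset.disjoint_left]
  intro l hl hl2
  simp only [Finset.mem_range, Finset.mem_Icc] at hl hl2
  omega

lemma GG_lt (I1 I2 : ℕ) {x y : ℕ} (hx : x < y) (hy1 : 1 ≤ y)
    (hyS : ¬ y % (I1+I2) ∈ Finset.Icc 1 I1) : GG I1 I2 x < GG I1 I2 y := by
  have h := GG_succ I1 I2 (y-1)
  rw [show y - 1 + 1 = y from by omega] at h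
  rw [if_neg hyS] at h
  have := GG_mono I1 I2 (show x ≤ y - 1 by omega)
  omega

lemma sub_mul_add (a u m : ℕ) (h : u ≤ a) : (a - u) * m + u * m = a * m := by
  rw [← Nat.add_mul, Nat.sub_add_cancel h]

lemma sum_pow_le (s : Finset ℕ) {x : ℝ} (h0 : 0 ≤ x) (h1 : x < 1) :
    ∑ j ∈ s, x ^ j ≤ 1 / (1 - x) := by
  have hx : (0:ℝ) < 1 - x := by linarith
  have hsub : s ⊆ Finset.range (s.sup id + 1) :=
    fun j hj => Finset.mem_range.2 (Nat.lt_succ_of_le (Finset.le_sup (f := id) hj))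
  calc ∑ j ∈ s, x ^ j ≤ ∑ j ∈ Finset.range (s.sup id + 1), x ^ j :=
        Finset.sum_le_sum_of_subset_of_nonneg hsub (fun i _ _ => by positivity)
    _ ≤ 1 / (1 - x) := by
        rw [geom_sum_eq (by linarith : x ≠ 1)]
        rw [show (x ^ (s.sup id + 1) - 1) / (x - 1) = (1 - x ^ (s.sup id + 1)) / (1 - x) by
          rw [← neg_div_neg_eq]; ring_nf]
        have hpn : (0:ℝ) ≤ x ^ (s.sup id + 1) := by positivity
        rw [div_le_div_iff₀ hx hx]
        nlinarith

lemma fiber_sum_le {α : Type*} [DecidableEq α] (F : Finset α) (e idx : α → ℕ) (C m off : ℕ)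
    {σ : ℝ} (h0 : 0 ≤ σ) (h1 : σ < 1) (hm : 1 ≤ m)
    (hfib : ∀ j, (F.filter (fun a => idx a = j)).card ≤ C)
    (hexp : ∀ a ∈ F, idx a * m + off ≤ e a) :
    ∑ a ∈ F, σ ^ e a ≤ C * σ ^ off / (1 - σ ^ m) := by
  have hσm : σ ^ m < 1 := pow_lt_one₀ h0 h1 (by omega)
  have hσm0 : 0 ≤ σ ^ m := pow_nonneg h0 m
  have hden : (0:ℝ) < 1 - σ ^ m := by linarith
  have h2 : ∑ a ∈ F, σ ^ e a ≤ ∑ a ∈ F, σ ^ off * (σ ^ m) ^ idx a := by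
    apply Finset.sum_le_sum
    intro a ha
    rw [← pow_mul, mul_comm m (idx a), ← pow_add]
    exact pow_le_pow_of_le_one h0 h1.le (by have := hexp a ha; omega)
  have h3 : ∑ a ∈ F, (σ ^ m) ^ idx a ≤ (C : ℝ) / (1 - σ ^ m) := by
    rw [← Finset.sum_fiberwise_of_maps_to (fun a ha => Finset.mem_image_of_mem idx ha)
      (fun a => (σ ^ m) ^ idx a)]
    calc ∑ j ∈ F.image idx, ∑ a ∈ F.filter (fun a => idx a = j), (σ ^ m) ^ idx a
        ≤ ∑ j ∈ F.image idx, (C : ℝ) * (σ ^ m) ^ j := by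
          apply Finset.sum_le_sum
          intro j _
          rw [Finset.sum_congr rfl (fun a ha => by rw [(Finset.mem_filter.1 ha).2]),
            Finset.sum_const, nsmul_eq_mul]
          have hc : ((F.filter (fun a => idx a = j)).card : ℝ) ≤ (C:ℝ) := by
            exact_mod_cast hfib j
          exact mul_le_mul_of_nonneg_right hc (by positivity)
      _ = (C:ℝ) * ∑ j ∈ F.image idx, (σ ^ m) ^ j := by rw [Finset.mul_sum]
      _ ≤ (C:ℝ) * (1 / (1 - σ ^ m)) :=
          mul_le_mul_of_nonneg_left (sum_pow_le _ hσm0 hσm) (Nat.cast_nonneg C)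
      _ = (C:ℝ) / (1 - σ ^ m) := by ring
  calc ∑ a ∈ F, σ ^ e a ≤ σ ^ off * ∑ a ∈ F, (σ ^ m) ^ idx a := by
        rw [← Finset.mul_sum] at h2; exact h2
    _ ≤ σ ^ off * ((C:ℝ) / (1 - σ ^ m)) :=
        mul_le_mul_of_nonneg_left h3 (by positivity)
    _ = C * σ ^ off / (1 - σ ^ m) := by ring

lemma inj_sum_le {α : Type*} [DecidableEq α] (F : Finset α) (e : α → ℕ) (off : ℕ)
    {σ : ℝ} (h0 : 0 ≤ σ) (h1 : σ < 1)
    (hinj : ∀ a ∈ F, ∀ b ∈ F, e a = e b → a = b)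
    (hoff : ∀ a ∈ F, off ≤ e a) :
    ∑ a ∈ F, σ ^ e a ≤ σ ^ off / (1 - σ) := by
  have := fiber_sum_le F e (fun a => e a - off) 1 1 off h0 h1 le_rfl
    (fun j => Finset.card_le_one.2 (by
      intro a ha b hb
      simp only [Finset.mem_filter] at ha hb
      exact hinj a ha.1 b hb.1 (by have := hoff a ha.1; have := hoff b hb.1; omega)))
    (fun a ha => by have := hoff a ha; show (e a - off) * 1 + off ≤ e a; omega)
  simpa using this
/-- Column bound, non-communication part. -/
lemma colNS_le (I1 I2 : ℕ) (hI2 : 1 ≤ I2) {σ : ℝ} (h0 : 0 ≤ σ) (h1 : σ < 1) (b : ℕ) :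
    ∑ s ∈ (Finset.Icc 1 b).filter (fun s => s % (I1+I2) ∈ Finset.Icc 1 I1),
      σ ^ (GG I1 I2 b - GG I1 I2 s) ≤ I1 / (1 - σ ^ I2) := by
  have hI : 0 < I1 + I2 := by omega
  have := fiber_sum_le ((Finset.Icc 1 b).filter (fun s => s % (I1+I2) ∈ Finset.Icc 1 I1))
    (fun s => GG I1 I2 b - GG I1 I2 s) (fun s => b / (I1+I2) - s / (I1+I2)) I1 I2 0 h0 h1 hI2
    ?_ ?_
  · simpa using this
  · intro j
    have hsub : (((Finset.Icc 1 b).filter (fun s => s % (I1+I2) ∈ Finset.Icc 1 I1)).filter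
        (fun s => b / (I1+I2) - s / (I1+I2) = j)).card ≤ (Finset.Icc 1 I1).card := by
      apply Finset.card_le_card_of_injOn (fun s => s % (I1+I2))
      · intro s hs
        simp only [Finset.mem_coe, Finset.mem_filter] at hs
        exact hs.1.2
      · intro s hs s' hs' hmm
        rw [Finset.mem_coe, Finset.mem_filter, Finset.mem_filter, Finset.mem_Icc] at hs hs'
        simp only at hmm hs hs'
        obtain ⟨⟨⟨ha1, ha2⟩, _⟩, hj⟩ := hs
        obtain ⟨⟨⟨hb1, hb2⟩, _⟩, hj'⟩ := hs'
        have d1 : s / (I1+I2) ≤ b / (I1+I2) := Nat.div_le_div_right ha2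
        have d2 : s' / (I1+I2) ≤ b / (I1+I2) := Nat.div_le_div_right hb2
        have hdd : s / (I1+I2) = s' / (I1+I2) := by omega
        have e1 := Nat.div_add_mod s (I1+I2)
        have e2 := Nat.div_add_mod s' (I1+I2)
        rw [hdd] at e1
        omega
    simpa using hsub
  · intro s hs
    simp only [Finset.mem_filter, Finset.mem_Icc] at hs
    obtain ⟨⟨hs1, hs2⟩, hm1, hm2⟩ := hs
    show (b / (I1+I2) - s / (I1+I2)) * I2 + 0 ≤ GG I1 I2 b - GG I1 I2 s
    have hdle : s / (I1+I2) ≤ b / (I1+I2) := Nat.div_le_div_right hs2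
    have hGs := GG_val I1 I2 hI2 s
    have hGb := GG_val I1 I2 hI2 b
    have hmul := sub_mul_add (b / (I1+I2)) (s / (I1+I2)) I2 hdle
    omega

/-- Column bound, communication part. -/
lemma colS_le (I1 I2 : ℕ) {σ : ℝ} (h0 : 0 ≤ σ) (h1 : σ < 1) (b : ℕ) :
    ∑ s ∈ (Finset.Icc 1 b).filter (fun s => ¬ s % (I1+I2) ∈ Finset.Icc 1 I1),
      σ ^ (GG I1 I2 b - GG I1 I2 s) ≤ 1 / (1 - σ) := by
  have := inj_sum_le ((Finset.Icc 1 b).filter (fun s => ¬ s % (I1+I2) ∈ Finset.Icc 1 I1))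
    (fun s => GG I1 I2 b - GG I1 I2 s) 0 h0 h1 ?_ (fun a _ => Nat.zero_le _)
  · simpa using this
  · intro x hx y hy hexy
    simp only [Finset.mem_filter, Finset.mem_Icc] at hx hy
    by_contra hne
    have hmx : GG I1 I2 x ≤ GG I1 I2 b := GG_mono I1 I2 hx.1.2
    have hmy : GG I1 I2 y ≤ GG I1 I2 b := GG_mono I1 I2 hy.1.2
    rcases Nat.lt_or_ge x y with h | h
    · have := GG_lt I1 I2 h hy.1.1 (by simpa [Finset.mem_Icc] using hy.2)
      omega
    · have hxy : y < x := by omega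
      have := GG_lt I1 I2 hxy hx.1.1 (by simpa [Finset.mem_Icc] using hx.2)
      omega

/-- counting: a set of `t`'s whose shifted value has fixed quotient and residue in
`[r0, I1]` has at most `I1 + 1 - r0` elements. -/
lemma card_div_fiber (I1 I2 q r0 : ℕ) (F : Finset ℕ)
    (hmem : ∀ t ∈ F, (r0 ≤ (t-1) % (I1+I2) ∧ (t-1) % (I1+I2) ≤ I1) ∧
      (t-1) / (I1+I2) = q ∧ 1 ≤ t) :
    F.card ≤ I1 + 1 - r0 := by
  have h : F.card ≤ (Finset.Icc r0 I1).card := by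
    apply Finset.card_le_card_of_injOn (fun t => (t-1) % (I1+I2))
    · intro t ht
      obtain ⟨⟨h1, h2⟩, _, _⟩ := hmem t ht
      exact Finset.mem_Icc.mpr ⟨h1, h2⟩
    · intro t ht t' ht' hmm
      obtain ⟨_, hq, h1t⟩ := hmem t (Finset.mem_coe.1 ht)
      obtain ⟨_, hq', h1t'⟩ := hmem t' (Finset.mem_coe.1 ht')
      simp only at hmm
      have e1 := Nat.div_add_mod (t-1) (I1+I2)
      have e2 := Nat.div_add_mod (t'-1) (I1+I2)
      rw [hq] at e1
      rw [hq'] at e2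
      omega
  simpa [Nat.card_Icc] using h

/-- Row bound, communication part: distinct exponents. -/
lemma rowS_le (I1 I2 : ℕ) {σ : ℝ} (h0 : 0 ≤ σ) (h1 : σ < 1) (s T : ℕ) (hs : 1 ≤ s) (off : ℕ)
    (hoff : ∀ t ∈ (Finset.Icc (s+1) T).filter
        (fun t => ¬ (t-1) % (I1+I2) ∈ Finset.Icc 1 I1),
      off ≤ GG I1 I2 (t-1) - GG I1 I2 s) :
    ∑ t ∈ (Finset.Icc (s+1) T).filter
        (fun t => ¬ (t-1) % (I1+I2) ∈ Finset.Icc 1 I1),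
      σ ^ (GG I1 I2 (t-1) - GG I1 I2 s) ≤ σ ^ off / (1 - σ) := by
  apply inj_sum_le _ _ off h0 h1 ?_ hoff
  intro x hx y hy hexy
  simp only [Finset.mem_filter, Finset.mem_Icc] at hx hy
  by_contra hne
  have hmx : GG I1 I2 s ≤ GG I1 I2 (x-1) := GG_mono I1 I2 (by omega)
  have hmy : GG I1 I2 s ≤ GG I1 I2 (y-1) := GG_mono I1 I2 (by omega)
  rcases Nat.lt_or_ge x y with h | h
  · have := GG_lt I1 I2 (show x-1 < y-1 by omega) (by omega)
      (by simpa [Finset.mem_Icc] using hy.2)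
    omega
  · have := GG_lt I1 I2 (show y-1 < x-1 by omega) (by omega)
      (by simpa [Finset.mem_Icc] using hx.2)
    omega

/-- Row bound, non-communication part, general `s` (for `Ĉ`). -/
lemma rowNS_le (I1 I2 : ℕ) (hI2 : 1 ≤ I2) {σ : ℝ} (h0 : 0 ≤ σ) (h1 : σ < 1)
    (s T : ℕ) (hs : 1 ≤ s) :
    ∑ t ∈ (Finset.Icc (s+1) T).filter
        (fun t => (t-1) % (I1+I2) ∈ Finset.Icc 1 I1),
      σ ^ (GG I1 I2 (t-1) - GG I1 I2 s) ≤ I1 / (1 - σ ^ I2) := by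
  have hI : 0 < I1 + I2 := by omega
  have hkey : ∀ t ∈ (Finset.Icc (s+1) T).filter
      (fun t => (t-1) % (I1+I2) ∈ Finset.Icc 1 I1),
      s / (I1+I2) + (if I1 < s % (I1+I2) then 1 else 0) ≤ (t-1) / (I1+I2) := by
    intro t ht
    simp only [Finset.mem_filter, Finset.mem_Icc] at ht
    have hd : s / (I1+I2) ≤ (t-1) / (I1+I2) := Nat.div_le_div_right (by omega)
    by_cases hc : I1 < s % (I1+I2)
    · rw [if_pos hc]
      rcases Nat.lt_or_ge (s / (I1+I2)) ((t-1) / (I1+I2)) with h | h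
      · omega
      · exfalso
        have hdd : (t-1) / (I1+I2) = s / (I1+I2) := by omega
        have e1 := Nat.div_add_mod (t-1) (I1+I2)
        have e2 := Nat.div_add_mod s (I1+I2)
        rw [hdd] at e1
        omega
    · rw [if_neg hc]; omega
  have hmain := fiber_sum_le ((Finset.Icc (s+1) T).filter
      (fun t => (t-1) % (I1+I2) ∈ Finset.Icc 1 I1))
    (fun t => GG I1 I2 (t-1) - GG I1 I2 s)
    (fun t => (t-1) / (I1+I2) - (s / (I1+I2) + (if I1 < s % (I1+I2) then 1 else 0)))
    I1 I2 0 h0 h1 hI2 ?_ ?_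
  · simpa using hmain
  · intro j
    apply (card_div_fiber I1 I2
      (s / (I1+I2) + (if I1 < s % (I1+I2) then 1 else 0) + j) 1 _ ?_).trans (by omega)
    intro t ht
    have htF := Finset.mem_of_mem_filter t ht
    have hj := (Finset.mem_filter.1 ht).2
    have hk := hkey t htF
    simp only [Finset.mem_filter, Finset.mem_Icc] at htF
    exact ⟨⟨htF.2.1, htF.2.2⟩, by omega, by omega⟩
  · intro t ht
    have hk := hkey t ht
    simp only [Finset.mem_filter, Finset.mem_Icc] at ht
    show ((t-1) / (I1+I2) - (s / (I1+I2) + (if I1 < s % (I1+I2) then 1 else 0))) * I2 + 0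
      ≤ GG I1 I2 (t-1) - GG I1 I2 s
    have hGt := GG_val I1 I2 hI2 (t-1)
    have hGs := GG_val I1 I2 hI2 s
    have hmod : s % (I1+I2) < I1 + I2 := Nat.mod_lt s hI
    have hmul := sub_mul_add ((t-1) / (I1+I2))
      (s / (I1+I2) + (if I1 < s % (I1+I2) then 1 else 0)) I2 hk
    by_cases hc : I1 < s % (I1+I2)
    · rw [if_pos hc] at hmul hk ⊢
      have hexp : (s / (I1+I2) + 1) * I2 = s / (I1+I2) * I2 + I2 := by
        rw [Nat.add_mul, Nat.one_mul]
      omega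
    · rw [if_neg hc] at hmul hk ⊢
      simp only [Nat.add_zero] at hmul hk ⊢
      omega

/-- Refined row bound for `Â`, `s` a non-communication index. -/
lemma rowA_le (I1 I2 : ℕ) (hI2 : 1 ≤ I2) {σ : ℝ} (h0 : 0 ≤ σ) (h1 : σ < 1)
    (s T : ℕ) (hs : 1 ≤ s) (hm1 : 1 ≤ s % (I1+I2)) (hm2 : s % (I1+I2) ≤ I1) :
    ∑ t ∈ Finset.Icc (s+1) T, σ ^ (GG I1 I2 (t-1) - GG I1 I2 s)
      ≤ ((I1 + 1 - s % (I1+I2) : ℕ) : ℝ) + (I1 : ℝ) * σ ^ I2 / (1 - σ ^ I2)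
        + σ / (1 - σ) := by
  have hI : 0 < I1 + I2 := by omega
  rw [← Finset.sum_filter_add_sum_filter_not (Finset.Icc (s+1) T)
    (fun t => (t-1) % (I1+I2) ∈ Finset.Icc 1 I1)]
  have hSpart : ∑ t ∈ (Finset.Icc (s+1) T).filter
      (fun t => ¬ (t-1) % (I1+I2) ∈ Finset.Icc 1 I1),
      σ ^ (GG I1 I2 (t-1) - GG I1 I2 s) ≤ σ / (1 - σ) := by
    have := rowS_le I1 I2 h0 h1 s T hs 1 ?_
    · rw [pow_one] at this; exact this
    · intro t ht
      simp only [Finset.mem_filter, Finset.mem_Icc] at ht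
      have hne : s < t - 1 := by
        rcases Nat.lt_or_ge s (t-1) with h | h
        · exact h
        · exfalso
          have : t - 1 = s := by omega
          rw [this] at ht
          exact ht.2 ⟨hm1, hm2⟩
      have := GG_lt I1 I2 hne (by omega) (by simpa [Finset.mem_Icc] using ht.2)
      omega
  -- split the non-communication part by whether the block is the same as that of s
  rw [← Finset.sum_filter_add_sum_filter_not ((Finset.Icc (s+1) T).filter
    (fun t => (t-1) % (I1+I2) ∈ Finset.Icc 1 I1))
    (fun t => (t-1) / (I1+I2) = s / (I1+I2))]
  have hfib0 : ∑ t ∈ (((Finset.Icc (s+1) T).filter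
      (fun t => (t-1) % (I1+I2) ∈ Finset.Icc 1 I1)).filter
      (fun t => (t-1) / (I1+I2) = s / (I1+I2))),
      σ ^ (GG I1 I2 (t-1) - GG I1 I2 s) ≤ ((I1 + 1 - s % (I1+I2) : ℕ) : ℝ) := by
    have hcard := card_div_fiber I1 I2 (s / (I1+I2)) (s % (I1+I2))
      (((Finset.Icc (s+1) T).filter
        (fun t => (t-1) % (I1+I2) ∈ Finset.Icc 1 I1)).filter
        (fun t => (t-1) / (I1+I2) = s / (I1+I2))) ?_
    · calc ∑ t ∈ _, σ ^ (GG I1 I2 (t-1) - GG I1 I2 s)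
          ≤ ∑ t ∈ (((Finset.Icc (s+1) T).filter
              (fun t => (t-1) % (I1+I2) ∈ Finset.Icc 1 I1)).filter
              (fun t => (t-1) / (I1+I2) = s / (I1+I2))), (1:ℝ) := by
            apply Finset.sum_le_sum
            intro t _
            exact pow_le_one₀ h0 h1.le
        _ ≤ ((I1 + 1 - s % (I1+I2) : ℕ) : ℝ) := by
            rw [Finset.sum_const, nsmul_eq_mul, mul_one]
            exact_mod_cast hcard
    · intro t ht
      simp only [Finset.mem_filter, Finset.mem_Icc] at ht
      obtain ⟨⟨⟨hts, htT⟩, hq1, hq2⟩, hdd⟩ := ht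
      have e1 := Nat.div_add_mod (t-1) (I1+I2)
      have e2 := Nat.div_add_mod s (I1+I2)
      rw [hdd] at e1
      exact ⟨⟨by omega, hq2⟩, hdd, by omega⟩
  have hrest : ∑ t ∈ (((Finset.Icc (s+1) T).filter
      (fun t => (t-1) % (I1+I2) ∈ Finset.Icc 1 I1)).filter
      (fun t => ¬ (t-1) / (I1+I2) = s / (I1+I2))),
      σ ^ (GG I1 I2 (t-1) - GG I1 I2 s) ≤ (I1 : ℝ) * σ ^ I2 / (1 - σ ^ I2) := by
    have hkey : ∀ t ∈ (((Finset.Icc (s+1) T).filter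
        (fun t => (t-1) % (I1+I2) ∈ Finset.Icc 1 I1)).filter
        (fun t => ¬ (t-1) / (I1+I2) = s / (I1+I2))),
        s / (I1+I2) + 1 ≤ (t-1) / (I1+I2) := by
      intro t ht
      simp only [Finset.mem_filter, Finset.mem_Icc] at ht
      have hd : s / (I1+I2) ≤ (t-1) / (I1+I2) := Nat.div_le_div_right (by omega)
      omega
    have hmain := fiber_sum_le (((Finset.Icc (s+1) T).filter
        (fun t => (t-1) % (I1+I2) ∈ Finset.Icc 1 I1)).filter
        (fun t => ¬ (t-1) / (I1+I2) = s / (I1+I2)))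
      (fun t => GG I1 I2 (t-1) - GG I1 I2 s)
      (fun t => (t-1) / (I1+I2) - (s / (I1+I2) + 1)) I1 I2 I2 h0 h1 hI2 ?_ ?_
    · exact hmain
    · intro j
      apply (card_div_fiber I1 I2 (s / (I1+I2) + 1 + j) 1 _ ?_).trans (by omega)
      intro t ht
      have htF := Finset.mem_of_mem_filter t ht
      have hj := (Finset.mem_filter.1 ht).2
      have hk := hkey t htF
      simp only [Finset.mem_filter, Finset.mem_Icc] at htF
      exact ⟨⟨htF.1.2.1, htF.1.2.2⟩, by omega, by omega⟩
    · intro t ht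
      have hk := hkey t ht
      simp only [Finset.mem_filter, Finset.mem_Icc] at ht
      show ((t-1) / (I1+I2) - (s / (I1+I2) + 1)) * I2 + I2
        ≤ GG I1 I2 (t-1) - GG I1 I2 s
      have hGt := GG_val I1 I2 hI2 (t-1)
      have hGs := GG_val I1 I2 hI2 s
      have hmul := sub_mul_add ((t-1) / (I1+I2)) (s / (I1+I2) + 1) I2 hk
      have hexp : (s / (I1+I2) + 1) * I2 = s / (I1+I2) * I2 + I2 := by
        rw [Nat.add_mul, Nat.one_mul]
      omega
  linarith [hfib0, hrest, hSpart]

lemma gauss2 (n : ℕ) : 2 * ∑ i ∈ Finset.Icc 1 n, i = n * (n+1) := by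
  induction n with
  | zero => simp
  | succ m ih =>
    rw [Finset.sum_Icc_succ_top (by omega)]
    have h2 : (m+1) * (m+1+1) = m*(m+1) + 2*(m+1) := by ring
    rw [h2]
    omega

lemma gaussN (n : ℕ) : 2 * ∑ i ∈ Finset.Icc 1 n, (n + 1 - i) = n * (n+1) := by
  rw [show ∑ i ∈ Finset.Icc 1 n, (n + 1 - i) = ∑ i ∈ Finset.Icc 1 n, i from ?_]
  · exact gauss2 n
  · apply Finset.sum_nbij' (i := fun k => n + 1 - k) (j := fun k => n + 1 - k)
    · intro a ha
      simp only [Finset.mem_Icc] at ha ⊢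
      omega
    · intro a ha
      simp only [Finset.mem_Icc] at ha ⊢
      omega
    · intro a ha
      simp only [Finset.mem_Icc] at ha
      omega
    · intro a ha
      simp only [Finset.mem_Icc] at ha
      omega
    · intro a _
      rfl

lemma gaussR (n : ℕ) : ∑ i ∈ Finset.Icc 1 n, ((n + 1 - i : ℕ) : ℝ) = n * (n+1) / 2 := by
  have h2 : (2:ℝ) * ∑ i ∈ Finset.Icc 1 n, ((n + 1 - i : ℕ) : ℝ) = (n:ℝ) * ((n:ℝ)+1) := by
    exact_mod_cast congrArg (Nat.cast : ℕ → ℝ) (gaussN n)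
  linarith

lemma sum_residue_le (I1 I2 R : ℕ) (hI2 : 1 ≤ I2) (g : ℕ → ℝ) (hg : ∀ i, 0 ≤ g i) :
    ∑ s ∈ (Finset.Icc 1 ((R+1)*(I1+I2)-1)).filter
      (fun s => s % (I1+I2) ∈ Finset.Icc 1 I1), g (s % (I1+I2))
    ≤ ((R:ℝ)+1) * ∑ i ∈ Finset.Icc 1 I1, g i := by
  rw [← Finset.sum_fiberwise_of_maps_to (g := fun s => s % (I1+I2)) (t := Finset.Icc 1 I1)
      (fun s hs => (Finset.mem_filter.1 hs).2) (fun s => g (s % (I1+I2))), Finset.mul_sum]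
  apply Finset.sum_le_sum
  intro i hi
  rw [Finset.sum_congr rfl (fun s hs => by rw [(Finset.mem_filter.1 hs).2]),
    Finset.sum_const, nsmul_eq_mul]
  apply mul_le_mul_of_nonneg_right ?_ (hg i)
  have hcard : (((Finset.Icc 1 ((R+1)*(I1+I2)-1)).filter
      (fun s => s % (I1+I2) ∈ Finset.Icc 1 I1)).filter
      (fun s => s % (I1+I2) = i)).card ≤ (Finset.range (R+1)).card := by
    apply Finset.card_le_card_of_injOn (fun s => s / (I1+I2))
    · intro s hs
      simp only [Finset.mem_coe, Finset.mem_filter, Finset.mem_Icc] at hs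
      apply Finset.mem_range.mpr
      rw [Nat.div_lt_iff_lt_mul (by omega : 0 < I1+I2)]
      have hpos : 0 < (R+1)*(I1+I2) := Nat.mul_pos (by omega) (by omega)
      omega
    · intro s hs s' hs' hmm
      rw [Finset.mem_coe, Finset.mem_filter] at hs hs'
      simp only at hmm
      have e1 := Nat.div_add_mod s (I1+I2)
      have e2 := Nat.div_add_mod s' (I1+I2)
      rw [hmm] at e1
      have hm1 := hs.2
      have hm2 := hs'.2
      omega
  rw [Finset.card_range] at hcard
  exact_mod_cast hcard

lemma rhoOne_nonneg (ρ : ℝ) (h0 : 0 ≤ ρ) (I1 I2 s t : ℕ) : 0 ≤ rhoOne ρ I1 I2 s t := by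
  unfold rhoOne
  split_ifs
  · positivity
  · norm_num

lemma rhoOne_eq (ρ : ℝ) (I1 I2 s t : ℕ) (hst : s < t) :
    rhoOne ρ I1 I2 (s+1) t = ρ ^ (GG I1 I2 (t-1) - GG I1 I2 s) := by
  unfold rhoOne
  by_cases h : s + 1 < t
  · rw [if_pos h]
    have hc := count_eq I1 I2 s (t-1) (by omega)
    congr 1
    omega
  · rw [if_neg h]
    have h2 : t - 1 = s := by omega
    rw [h2, Nat.sub_self, pow_zero]

lemma col_rho (I1 I2 : ℕ) (hI2 : 1 ≤ I2) {σ : ℝ} (h0 : 0 ≤ σ) (h1 : σ < 1) (t : ℕ) :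
    ∑ s ∈ Finset.Icc 1 (t-1), σ ^ (GG I1 I2 (t-1) - GG I1 I2 s)
      ≤ (I1:ℝ)/(1-σ^I2) + 1/(1-σ) := by
  rw [← Finset.sum_filter_add_sum_filter_not (Finset.Icc 1 (t-1))
    (fun s => s % (I1+I2) ∈ Finset.Icc 1 I1)]
  exact add_le_add (colNS_le I1 I2 hI2 h0 h1 (t-1)) (colS_le I1 I2 h0 h1 (t-1))

lemma col_rhoOne (I1 I2 : ℕ) (hI2 : 1 ≤ I2) {ρ : ℝ} (h0 : 0 ≤ ρ) (h1 : ρ < 1) (t : ℕ) :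
    ∑ s ∈ Finset.Icc 1 (t-1), rhoOne ρ I1 I2 (s+1) t ≤ (I1:ℝ)/(1-ρ^I2) + 1/(1-ρ) := by
  have hconv : ∀ s ∈ Finset.Icc 1 (t-1),
      rhoOne ρ I1 I2 (s+1) t = ρ ^ (GG I1 I2 (t-1) - GG I1 I2 s) := by
    intro s hs
    simp only [Finset.mem_Icc] at hs
    exact rhoOne_eq ρ I1 I2 s t (by omega)
  rw [Finset.sum_congr rfl hconv]
  exact col_rho I1 I2 hI2 h0 h1 t

lemma row_rhoOne (I1 I2 : ℕ) (hI2 : 1 ≤ I2) {ρ : ℝ} (h0 : 0 ≤ ρ) (h1 : ρ < 1)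
    (s T : ℕ) (hs : 1 ≤ s) :
    ∑ t ∈ Finset.Icc (s+1) T, rhoOne ρ I1 I2 (s+1) t ≤ (I1:ℝ)/(1-ρ^I2) + 1/(1-ρ) := by
  have hconv : ∀ t ∈ Finset.Icc (s+1) T,
      rhoOne ρ I1 I2 (s+1) t = ρ ^ (GG I1 I2 (t-1) - GG I1 I2 s) := by
    intro t ht
    simp only [Finset.mem_Icc] at ht
    exact rhoOne_eq ρ I1 I2 s t (by omega)
  rw [Finset.sum_congr rfl hconv,
    ← Finset.sum_filter_add_sum_filter_not (Finset.Icc (s+1) T)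
      (fun t => (t-1) % (I1+I2) ∈ Finset.Icc 1 I1)]
  have hS := rowS_le I1 I2 h0 h1 s T hs 0 (fun t _ => Nat.zero_le _)
  rw [pow_zero] at hS
  exact add_le_add (rowNS_le I1 I2 hI2 h0 h1 s T hs) hS

/-- **Theorem (bounds on `Â_T`, `B̂_T`, `Ĉ_T` for the scheme `I_T¹`).**
For `T = (R+1)·I`,
`Â_T ≤ (1/(2I))·(((1+ρ^{2I₂})/(1−ρ^{2I₂}))I₁² + ((1+ρ²)/(1−ρ²))I₁) + 1/(1−ρ²)`
and `max{B̂_T, Ĉ_T} ≤ K̃²` where `K̃ = I₁/(1−ρ^{I₂}) + 1/(1−ρ)`. -/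

theorem scheme_one_hat_bounds
    (ρ : ℝ) (hρ0 : 0 ≤ ρ) (hρ1 : ρ < 1)
    (I1 I2 : ℕ) (hI2 : 1 ≤ I2)
    (T R : ℕ) (hT : T = (R + 1) * (I1 + I2)) :
    ATHatOne ρ I1 I2 T ≤
      (2 * ((I1 : ℝ) + I2))⁻¹ *
          ((1 + ρ ^ (2 * I2)) / (1 - ρ ^ (2 * I2)) * (I1 : ℝ) ^ 2 +
            (1 + ρ ^ 2) / (1 - ρ ^ 2) * (I1 : ℝ)) +
        1 / (1 - ρ ^ 2) ∧
      max (BTHatOne ρ I1 I2 T) (CTHatOne ρ I1 I2 T) ≤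
        ((I1 : ℝ) / (1 - ρ ^ I2) + 1 / (1 - ρ)) ^ 2 := by
  subst hT
  set T := (R + 1) * (I1 + I2) with hT
  have hT1 : 1 ≤ T := by
    have := Nat.mul_pos (show 0 < R + 1 by omega) (show 0 < I1 + I2 by omega)
    omega
  have hTpos : (0:ℝ) < (T:ℝ) := by exact_mod_cast hT1
  have hρI2 : ρ ^ I2 < 1 := pow_lt_one₀ hρ0 hρ1 (by omega)
  have hρI2' : 0 < 1 - ρ ^ I2 := by linarith
  have hρ1' : 0 < 1 - ρ := by linarith
  set K : ℝ := (I1:ℝ)/(1-ρ^I2) + 1/(1-ρ) with hK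
  have hK0 : 0 ≤ K := by positivity
  -- column bounds and nonnegativity
  have hcol : ∀ t : ℕ, ∑ s ∈ Finset.Icc 1 (t-1), rhoOne ρ I1 I2 (s+1) t ≤ K :=
    fun t => col_rhoOne I1 I2 hI2 hρ0 hρ1 t
  have hcol0 : ∀ t : ℕ, 0 ≤ ∑ s ∈ Finset.Icc 1 (t-1), rhoOne ρ I1 I2 (s+1) t :=
    fun t => Finset.sum_nonneg (fun s _ => rhoOne_nonneg ρ hρ0 I1 I2 (s+1) t)
  constructor
  · -- A part
    set σ : ℝ := ρ ^ 2 with hσ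
    have hσ0 : 0 ≤ σ := by positivity
    have hσ1 : σ < 1 := by
      rw [hσ]
      exact pow_lt_one₀ hρ0 hρ1 (by norm_num)
    have hσI2 : σ ^ I2 < 1 := pow_lt_one₀ hσ0 hσ1 (by omega)
    have hσI2' : (0:ℝ) < 1 - σ ^ I2 := by linarith
    have hσ1' : (0:ℝ) < 1 - σ := by linarith
    have hA : ATHatOne ρ I1 I2 T = (T:ℝ)⁻¹ * ∑ t ∈ Finset.Icc 1 T,
        ∑ s ∈ Finset.Icc 1 (t-1), σ ^ (GG I1 I2 (t-1) - GG I1 I2 s) := by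
      unfold ATHatOne
      congr 1
      apply Finset.sum_congr rfl
      intro t ht
      apply Finset.sum_congr rfl
      intro s hs
      simp only [Finset.mem_Icc] at ht hs
      rw [rhoOne_eq ρ I1 I2 s t (by omega), pow_right_comm, ← hσ]
    rw [hA]
    have hsplit : ∀ t : ℕ, ∑ s ∈ Finset.Icc 1 (t-1), σ ^ (GG I1 I2 (t-1) - GG I1 I2 s)
        = (∑ s ∈ (Finset.Icc 1 (t-1)).filter (fun s => s % (I1+I2) ∈ Finset.Icc 1 I1),
            σ ^ (GG I1 I2 (t-1) - GG I1 I2 s))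
          + ∑ s ∈ (Finset.Icc 1 (t-1)).filter (fun s => ¬ s % (I1+I2) ∈ Finset.Icc 1 I1),
            σ ^ (GG I1 I2 (t-1) - GG I1 I2 s) :=
      fun t => (Finset.sum_filter_add_sum_filter_not _ _ _).symm
    rw [Finset.sum_congr rfl (fun t _ => hsplit t), Finset.sum_add_distrib]
    have hswap : ∑ t ∈ Finset.Icc 1 T, ∑ s ∈ (Finset.Icc 1 (t-1)).filter
          (fun s => s % (I1+I2) ∈ Finset.Icc 1 I1), σ ^ (GG I1 I2 (t-1) - GG I1 I2 s)
        = ∑ s ∈ (Finset.Icc 1 (T-1)).filter (fun s => s % (I1+I2) ∈ Finset.Icc 1 I1),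
            ∑ t ∈ Finset.Icc (s+1) T, σ ^ (GG I1 I2 (t-1) - GG I1 I2 s) := by
      apply Finset.sum_comm'
      intro t s
      simp only [Finset.mem_filter, Finset.mem_Icc]
      constructor
      · rintro ⟨⟨h1, h2⟩, ⟨h3, h4⟩, h5⟩
        exact ⟨⟨by omega, by omega⟩, ⟨by omega, by omega⟩, h5⟩
      · rintro ⟨⟨h1, h2⟩, ⟨h3, h4⟩, h5⟩
        exact ⟨⟨by omega, by omega⟩, ⟨by omega, by omega⟩, h5⟩
    rw [hswap]
    have hrow : ∀ s ∈ (Finset.Icc 1 (T-1)).filter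
        (fun s => s % (I1+I2) ∈ Finset.Icc 1 I1),
        ∑ t ∈ Finset.Icc (s+1) T, σ ^ (GG I1 I2 (t-1) - GG I1 I2 s)
          ≤ ((I1 + 1 - s % (I1+I2) : ℕ) : ℝ) + (I1:ℝ) * σ ^ I2 / (1 - σ ^ I2)
            + σ / (1-σ) := by
      intro s hs
      simp only [Finset.mem_filter, Finset.mem_Icc] at hs
      exact rowA_le I1 I2 hI2 hσ0 hσ1 s T hs.1.1 hs.2.1 hs.2.2
    have hg : ∀ i : ℕ, (0:ℝ) ≤ ((I1 + 1 - i : ℕ) : ℝ)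
        + (I1:ℝ) * σ ^ I2 / (1 - σ ^ I2) + σ / (1-σ) := by
      intro i
      have : (0:ℝ) ≤ ((I1 + 1 - i : ℕ) : ℝ) := Nat.cast_nonneg _
      have h2 : (0:ℝ) ≤ (I1:ℝ) * σ ^ I2 / (1 - σ ^ I2) := by positivity
      have h3 : (0:ℝ) ≤ σ / (1-σ) := by positivity
      linarith
    have hNS : ∑ s ∈ (Finset.Icc 1 (T-1)).filter
        (fun s => s % (I1+I2) ∈ Finset.Icc 1 I1),
        ∑ t ∈ Finset.Icc (s+1) T, σ ^ (GG I1 I2 (t-1) - GG I1 I2 s)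
        ≤ ((R:ℝ)+1) * ∑ i ∈ Finset.Icc 1 I1,
            (((I1 + 1 - i : ℕ) : ℝ) + (I1:ℝ) * σ ^ I2 / (1 - σ ^ I2) + σ / (1-σ)) := by
      refine le_trans (Finset.sum_le_sum hrow) ?_
      have := sum_residue_le I1 I2 R hI2
        (fun i => ((I1 + 1 - i : ℕ) : ℝ) + (I1:ℝ) * σ ^ I2 / (1 - σ ^ I2) + σ / (1-σ)) hg
      rw [hT]
      exact this
    have hSp : ∑ t ∈ Finset.Icc 1 T, ∑ s ∈ (Finset.Icc 1 (t-1)).filter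
        (fun s => ¬ s % (I1+I2) ∈ Finset.Icc 1 I1), σ ^ (GG I1 I2 (t-1) - GG I1 I2 s)
        ≤ (T:ℝ) * (1/(1-σ)) := by
      refine le_trans (Finset.sum_le_sum
        (fun t _ => colS_le I1 I2 hσ0 hσ1 (t-1))) ?_
      rw [Finset.sum_const, Nat.card_Icc, nsmul_eq_mul,
        show T + 1 - 1 = T from by omega]
    have hsum : ∑ i ∈ Finset.Icc 1 I1,
        (((I1 + 1 - i : ℕ) : ℝ) + (I1:ℝ) * σ ^ I2 / (1 - σ ^ I2) + σ / (1-σ))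
        = (I1:ℝ) * ((I1:ℝ)+1)/2 + (I1:ℝ) * ((I1:ℝ) * σ ^ I2 / (1 - σ ^ I2))
          + (I1:ℝ) * (σ / (1-σ)) := by
      rw [Finset.sum_add_distrib, Finset.sum_add_distrib, gaussR I1,
        Finset.sum_const, Finset.sum_const, Nat.card_Icc,
        show I1 + 1 - 1 = I1 from by omega, nsmul_eq_mul, nsmul_eq_mul]
    have hne1 : (1 - σ ^ I2) ≠ 0 := ne_of_gt hσI2'
    have hne2 : (1 - σ) ≠ 0 := ne_of_gt hσ1'
    have hne3 : ((R:ℝ)+1) ≠ 0 := by positivity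
    have hI2R : (1:ℝ) ≤ (I2:ℝ) := by exact_mod_cast hI2
    have hne4 : ((I1:ℝ)+(I2:ℝ)) ≠ 0 := by
      have := Nat.cast_nonneg (α := ℝ) I1
      linarith
    have hTc : (T:ℝ) = ((R:ℝ)+1)*((I1:ℝ)+(I2:ℝ)) := by
      rw [hT]; push_cast; ring
    calc (T:ℝ)⁻¹ * ((∑ s ∈ (Finset.Icc 1 (T-1)).filter
          (fun s => s % (I1+I2) ∈ Finset.Icc 1 I1),
          ∑ t ∈ Finset.Icc (s+1) T, σ ^ (GG I1 I2 (t-1) - GG I1 I2 s))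
          + ∑ t ∈ Finset.Icc 1 T, ∑ s ∈ (Finset.Icc 1 (t-1)).filter
            (fun s => ¬ s % (I1+I2) ∈ Finset.Icc 1 I1),
            σ ^ (GG I1 I2 (t-1) - GG I1 I2 s))
        ≤ (T:ℝ)⁻¹ * (((R:ℝ)+1) * ((I1:ℝ) * ((I1:ℝ)+1)/2
            + (I1:ℝ) * ((I1:ℝ) * σ ^ I2 / (1 - σ ^ I2)) + (I1:ℝ) * (σ / (1-σ)))
          + (T:ℝ) * (1/(1-σ))) := by
          rw [← hsum]
          exact mul_le_mul_of_nonneg_left (add_le_add hNS hSp) (by positivity)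
      _ = (2 * ((I1 : ℝ) + I2))⁻¹ *
            ((1 + ρ ^ (2 * I2)) / (1 - ρ ^ (2 * I2)) * (I1 : ℝ) ^ 2 +
              (1 + σ) / (1 - σ) * (I1 : ℝ)) + 1 / (1 - σ) := by
          rw [show ρ ^ (2 * I2) = σ ^ I2 from by rw [pow_mul, ← hσ], hTc]
          field_simp
          ring
  · -- B and C parts
    apply max_le
    · unfold BTHatOne
      calc (T:ℝ)⁻¹ * ∑ t ∈ Finset.Icc 1 T,
            (∑ s ∈ Finset.Icc 1 (t-1), rhoOne ρ I1 I2 (s+1) t) ^ 2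
          ≤ (T:ℝ)⁻¹ * ∑ t ∈ Finset.Icc 1 T, K ^ 2 := by
            apply mul_le_mul_of_nonneg_left ?_ (by positivity)
            apply Finset.sum_le_sum
            intro t _
            exact pow_le_pow_left₀ (hcol0 t) (hcol t) 2
        _ = K ^ 2 := by
            rw [Finset.sum_const, Nat.card_Icc, nsmul_eq_mul]
            rw [show T + 1 - 1 = T from by omega]
            field_simp
    · unfold CTHatOne
      apply Real.iSup_le ?_ (by positivity)
      intro s
      apply Real.iSup_le ?_ (by positivity)
      intro hsmem
      simp only [Finset.mem_Icc] at hsmem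
      calc ∑ t ∈ Finset.Icc (s+1) T, rhoOne ρ I1 I2 (s+1) t *
            ∑ l ∈ Finset.Icc 1 (t-1), rhoOne ρ I1 I2 (l+1) t
          ≤ ∑ t ∈ Finset.Icc (s+1) T, rhoOne ρ I1 I2 (s+1) t * K := by
            apply Finset.sum_le_sum
            intro t _
            exact mul_le_mul_of_nonneg_left (hcol t) (rhoOne_nonneg ρ hρ0 I1 I2 (s+1) t)
        _ = (∑ t ∈ Finset.Icc (s+1) T, rhoOne ρ I1 I2 (s+1) t) * K := by
            rw [Finset.sum_mul]
        _ ≤ K * K :=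
            mul_le_mul_of_nonneg_right (row_rhoOne I1 I2 hI2 hρ0 hρ1 s T hsmem.1) hK0
        _ = K ^ 2 := (sq K).symm
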